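/- arXiv:1606.02262 — 2 statements merged into one kernel-verified Lean document; each statement's English description precedes it below -/
import Mathlib

section
/- Let k be an algebraically closed field and let p ⊆ q be standard parabolic subalgebras of gl_n(k). If the commuting variety C(p) is irreducible (in the Zariski topology on p × p), then the commuting variety C(q) is irreducible (in the Zariski topology on q × q). -/
/-!
`C(q)` is the image of the irreducible variety `q × C(p)` under the polynomial map
`(G, X, Y) ↦ (G X adj G, G Y adj G)`, and the vanishing ideal of the image of a polynomial map
is the preimage of the vanishing ideal, so it is prime as well.
The image lies in `C(q)` since `adj G` is again block triangular and
`(G X adj G)(G Y adj G) = det G • G (XY) adj G`. Conversely, a commuting pair in `q` has a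
common eigenvector in each step of the block flag of `q` modulo the previous vectors, which
produces an invertible `G ∈ q` conjugating the pair into upper triangular matrices, and those
lie in `p`. Finally `q × C(p)` is irreducible because `C(p)` is and `k` is infinite.
-/

open MvPolynomial

/-- Index set for the entries of the standard parabolic subalgebra of block upper triangular
matrices determined by the (monotone) block-index function `b : Fin n → ℕ`: pairs `(i,j)`
with `b i ≤ b j`. -/
abbrev PIdx (n : ℕ) (b : Fin n → ℕ) : Type := {q : Fin n × Fin n // b q.1 ≤ b q.2}

/-- The coordinate ring of the affine space `p × p` for the standard parabolic subalgebra `p`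
determined by `b`. -/
abbrev Rp (k : Type*) [Field k] (n : ℕ) (b : Fin n → ℕ) :=
  MvPolynomial (PIdx n b ⊕ PIdx n b) k

/-- The first (block upper triangular) matrix corresponding to a point of `p × p`. -/
def pMatX (k : Type*) [Field k] {n : ℕ} {b : Fin n → ℕ} (x : PIdx n b ⊕ PIdx n b → k) :
    Matrix (Fin n) (Fin n) k :=
  fun i j => if h : b i ≤ b j then x (Sum.inl ⟨(i, j), h⟩) else 0

/-- The second (block upper triangular) matrix corresponding to a point of `p × p`. -/
def pMatY (k : Type*) [Field k] {n : ℕ} {b : Fin n → ℕ} (x : PIdx n b ⊕ PIdx n b → k) :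
    Matrix (Fin n) (Fin n) k :=
  fun i j => if h : b i ≤ b j then x (Sum.inr ⟨(i, j), h⟩) else 0

/-- The commuting variety `C(p) = {(X,Y) ∈ p × p : XY = YX}` of the standard parabolic
subalgebra `p` of `gl_n(k)` determined by `b`, as a set of points of the affine space
`p × p`. -/
def Cp (k : Type*) [Field k] (n : ℕ) (b : Fin n → ℕ) : Set (PIdx n b ⊕ PIdx n b → k) :=
  {x | pMatX k x * pMatY k x = pMatY k x * pMatX k x}

section VanishingIdeal
variable {k : Type*} [Field k] {σ τ : Type*}

theorem aeval_aeval_apply (u : τ → k) (g : σ → MvPolynomial τ k) (P : MvPolynomial σ k) :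
    aeval u (aeval g P) = aeval (fun s => aeval u (g s)) P :=
  AlgHom.congr_fun (comp_aeval g (aeval u)) P

theorem vanishingIdeal_image_aeval (g : σ → MvPolynomial τ k) (D : Set (τ → k)) :
    vanishingIdeal k ((fun u s => aeval u (g s)) '' D) =
      (vanishingIdeal k D).comap (aeval g) := by
  ext P
  simp only [mem_vanishingIdeal_iff, Ideal.mem_comap, Set.forall_mem_image, aeval_aeval_apply]

theorem aeval_aeval_sumElim_X_C (w : τ → k) (a : σ → k) (P : MvPolynomial (σ ⊕ τ) k) :
    aeval a (aeval (Sum.elim X (C ∘ w)) P) = aeval (Sum.elim a w) P := by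
  rw [aeval_aeval_apply]
  congr 1
  ext (s | s) <;> simp

theorem aeval_aeval_sumElim_C_X (a : σ → k) (w : τ → k) (P : MvPolynomial (σ ⊕ τ) k) :
    aeval w (aeval (Sum.elim (C ∘ a) X) P) = aeval (Sum.elim a w) P := by
  rw [aeval_aeval_apply]
  congr 1
  ext (s | s) <;> simp

theorem isPrime_vanishingIdeal_preimage_inr [Infinite k] {S : Set (τ → k)}
    (hS : (vanishingIdeal k S).IsPrime) :
    (vanishingIdeal k ((· ∘ Sum.inr) ⁻¹' S : Set (σ ⊕ τ → k))).IsPrime := by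
  obtain ⟨w₀, hw₀⟩ : S.Nonempty := Set.nonempty_iff_ne_empty.2 fun h =>
    hS.ne_top (h ▸ vanishingIdeal_empty)
  refine ⟨fun htop => ?_, fun {P Q} hPQ => ?_⟩
  · have h1 : (1 : MvPolynomial (σ ⊕ τ) k) ∈ vanishingIdeal k _ := htop ▸ Submodule.mem_top
    have := mem_vanishingIdeal_iff.1 h1 (Sum.elim 0 w₀) hw₀
    simp at this
  by_contra! h
  simp only [mem_vanishingIdeal_iff, Set.mem_preimage, not_forall] at h hPQ
  obtain ⟨⟨u, hu, hPu⟩, ⟨u', hu', hQu'⟩⟩ := h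
  -- `P(·, u ∘ inr) * Q(·, u' ∘ inr)` is a nonzero polynomial on the infinite field `k`,
  -- so it is nonzero at some `a`; then neither `P(a, ·)` nor `Q(a, ·)` vanishes on `S`.
  have hf : aeval (Sum.elim X (C ∘ (u ∘ Sum.inr))) P ≠ 0 := fun h => hPu <| by
    rw [← Sum.elim_comp_inl_inr u, ← aeval_aeval_sumElim_X_C, h, map_zero]
  have hg : aeval (Sum.elim X (C ∘ (u' ∘ Sum.inr))) Q ≠ 0 := fun h => hQu' <| by
    rw [← Sum.elim_comp_inl_inr u', ← aeval_aeval_sumElim_X_C, h, map_zero]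
  obtain ⟨a, ha⟩ : ∃ a : σ → k, aeval a (aeval (Sum.elim X (C ∘ (u ∘ Sum.inr))) P *
      aeval (Sum.elim X (C ∘ (u' ∘ Sum.inr))) Q) ≠ 0 := by
    by_contra! h
    exact mul_ne_zero hf hg (MvPolynomial.funext fun a => by simpa using h a)
  rw [map_mul, aeval_aeval_sumElim_X_C, aeval_aeval_sumElim_X_C] at ha
  have hmem :
      aeval (Sum.elim (C ∘ a) X) P * aeval (Sum.elim (C ∘ a) X) Q ∈ vanishingIdeal k S := by
    rw [← map_mul, mem_vanishingIdeal_iff]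
    intro w hw
    rw [aeval_aeval_sumElim_C_X]
    exact hPQ _ hw
  rcases hS.mem_or_mem hmem with h | h <;> rw [mem_vanishingIdeal_iff] at h
  · exact left_ne_zero_of_mul ha (by rw [← aeval_aeval_sumElim_C_X]; exact h _ hu)
  · exact right_ne_zero_of_mul ha (by rw [← aeval_aeval_sumElim_C_X]; exact h _ hu')

end VanishingIdeal

namespace Matrix
variable {m α R : Type*} [Fintype m] [DecidableEq m] [LinearOrder α] {b : m → α}
  [CommRing R] [IsDomain R] {M : Matrix m m R}

theorem BlockTriangular.adjugate_of_det_ne_zero (hM : M.BlockTriangular b) (hdet : M.det ≠ 0) :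
    M.adjugate.BlockTriangular b := by
  let φ := algebraMap R (FractionRing R)
  have hφ : Function.Injective φ := IsFractionRing.injective R (FractionRing R)
  have hdet' : (M.map φ).det ≠ 0 := by
    rw [← RingHom.mapMatrix_apply, ← RingHom.map_det]; exact (map_ne_zero_iff φ hφ).2 hdet
  have : Invertible (M.map φ) := invertibleOfIsUnitDet _ (isUnit_iff_ne_zero.2 hdet')
  have hinv := blockTriangular_inv_of_blockTriangular (hM.map φ)
  have hadj : (M.map φ).adjugate = (M.map φ).det • (M.map φ)⁻¹ := by
    rw [inv_def, smul_smul, Ring.inverse_eq_inv', mul_inv_cancel₀ hdet', one_smul]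
  intro i j hij
  apply hφ
  have := congrFun₂ (RingHom.map_adjugate φ M) i j
  simp only [RingHom.mapMatrix_apply, map_apply] at this
  rw [this, hadj, smul_apply, hinv hij, smul_zero, map_zero]

theorem BlockTriangular.adjugate (hM : M.BlockTriangular b) : M.adjugate.BlockTriangular b := by
  have hchar := hM.neg.charmatrix
  have hev : (Matrix.charmatrix (-M)).map (Polynomial.evalRingHom 0) = M := by
    ext i j
    by_cases h : i = j
    · subst h; simp [charmatrix_apply_eq]
    · simp [charmatrix_apply_ne _ _ _ h]
  rw [← hev, ← RingHom.mapMatrix_apply, ← RingHom.map_adjugate]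
  exact (hchar.adjugate_of_det_ne_zero (charpoly_monic _).ne_zero).map _

end Matrix

open Module Submodule Set

theorem Submodule.mem_sup_span_singleton_of_mapQ_eq_smul {k V : Type*} [Field k] [AddCommGroup V]
    [Module k V] {F : Submodule k V} {φ : End k V} (hφ : MapsTo φ F F) {x : V} {μ : k}
    (h : F.mapQ F φ hφ (F.mkQ x) = μ • F.mkQ x) : φ x ∈ F ⊔ span k {x} := by
  have hx : φ x - μ • x ∈ F := by
    rw [← Quotient.mk_eq_zero, Quotient.mk_sub, Quotient.mk_smul]
    exact sub_eq_zero.2 h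
  simpa using add_mem (mem_sup_left hx) (mem_sup_right (smul_mem _ μ (mem_span_singleton_self x)))

section CommonEigenvector
variable {k V : Type*} [Field k] [IsAlgClosed k] [AddCommGroup V] [Module k V]
  [FiniteDimensional k V]

theorem Module.End.exists_hasEigenvector_of_commute [Nontrivial V] {f g : End k V}
    (hfg : Commute f g) : ∃ v μ ν, f.HasEigenvector μ v ∧ g.HasEigenvector ν v := by
  obtain ⟨μ, hμ⟩ := f.exists_eigenvalue
  have hgE : MapsTo g (f.eigenspace μ) (f.eigenspace μ) :=
    End.mapsTo_genEigenspace_of_comm hfg μ 1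
  have : Nontrivial (f.eigenspace μ) := nontrivial_iff_ne_bot.2 hμ
  obtain ⟨ν, hν⟩ := End.exists_eigenvalue (g.restrict hgE)
  obtain ⟨y, hy⟩ := hν.exists_hasEigenvector
  refine ⟨y, μ, ν, ⟨y.2, by simpa using hy.2⟩, ?_, by simpa using hy.2⟩
  exact End.mem_eigenspace_iff.2 (congrArg Subtype.val hy.apply_eq_smul)

theorem exists_mem_sup_span_singleton_of_commute {f g : End k V} (hfg : Commute f g)
    {F A : Submodule k V} (hFA : F < A) (hfF : MapsTo f F F) (hgF : MapsTo g F F)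
    (hfA : MapsTo f A A) (hgA : MapsTo g A A) :
    ∃ x ∈ A, x ∉ F ∧ f x ∈ F ⊔ span k {x} ∧ g x ∈ F ⊔ span k {x} := by
  let f' := F.mapQ F f hfF
  let g' := F.mapQ F g hgF
  let A' := A.map F.mkQ
  have hf'A' : MapsTo f' A' A' := by
    rintro _ ⟨x, hx, rfl⟩; exact ⟨f x, hfA hx, rfl⟩
  have hg'A' : MapsTo g' A' A' := by
    rintro _ ⟨x, hx, rfl⟩; exact ⟨g x, hgA hx, rfl⟩
  have hf'g' : Commute f' g' := by
    ext x
    exact congrArg F.mkQ (LinearMap.congr_fun hfg.eq x)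
  have : Nontrivial A' := by
    obtain ⟨x, hxA, hxF⟩ := SetLike.exists_of_lt hFA
    exact nontrivial_of_ne ⟨F.mkQ x, x, hxA, rfl⟩ 0
      (by simpa [Subtype.ext_iff, Quotient.mk_eq_zero] using hxF)
  obtain ⟨z, μ, ν, hμ, hν⟩ :=
    End.exists_hasEigenvector_of_commute (LinearMap.restrict_commute hf'g' hf'A' hg'A')
  obtain ⟨x, hxA, hxz⟩ := z.2
  have hxF : x ∉ F := by
    rw [← Quotient.mk_eq_zero]; exact fun h => hμ.2 (Subtype.ext (hxz ▸ h))
  refine ⟨x, hxA, hxF, mem_sup_span_singleton_of_mapQ_eq_smul hfF (μ := μ) ?_,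
    mem_sup_span_singleton_of_mapQ_eq_smul hgF (μ := ν) ?_⟩
  · rw [hxz]; exact congrArg Subtype.val hμ.apply_eq_smul
  · rw [hxz]; exact congrArg Subtype.val hν.apply_eq_smul

end CommonEigenvector

theorem Fin.snoc_mem_span_image_Iic {k V : Type*} [Field k] [AddCommGroup V] [Module k V]
    {j : ℕ} {v : Fin j → V} {x : V} {φ : V → V} (hv : ∀ i, φ (v i) ∈ span k (v '' Iic i))
    (hx : φ x ∈ span k (range v) ⊔ span k {x}) (i : Fin (j + 1)) :
    φ (Fin.snoc (α := fun _ => V) v x i) ∈ span k (Fin.snoc (α := fun _ => V) v x '' Iic i) := by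
  induction i using Fin.lastCases with
  | last =>
    rw [Fin.snoc_last, ← Fin.top_eq_last, Iic_top, image_univ, Fin.range_snoc, span_insert,
      sup_comm]
    exact hx
  | cast i =>
    rw [Fin.snoc_castSucc]
    refine span_mono ?_ (hv i)
    rintro _ ⟨l, hl, rfl⟩
    exact ⟨l.castSucc, Fin.castSucc_le_castSucc_iff.2 hl, Fin.snoc_castSucc ..⟩

section BlockFlag
variable (k : Type*) {ι α : Type*} [Field k] [LinearOrder α]

def blockFlag (c : ι → α) (t : α) : Submodule k (ι → k) where
  carrier := {x | ∀ l, t < c l → x l = 0}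
  add_mem' hx hy l hl := by simp [hx l hl, hy l hl]
  zero_mem' _ _ := rfl
  smul_mem' a x hx l hl := by simp [hx l hl]

variable {k} {c : ι → α}

theorem blockFlag_mono {s t : α} (h : s ≤ t) : blockFlag k c s ≤ blockFlag k c t :=
  fun _ hx l hl => hx l (h.trans_lt hl)

theorem Pi.single_mem_blockFlag [DecidableEq ι] {i : ι} {t : α} (h : c i ≤ t) :
    Pi.single i (1 : k) ∈ blockFlag k c t := fun l hl =>
  Pi.single_eq_of_ne (by rintro rfl; exact hl.not_ge h) _

theorem le_finrank_blockFlag {n : ℕ} {c : Fin n → α} (hc : Monotone c) (i : Fin n) :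
    (i : ℕ) + 1 ≤ finrank k (blockFlag k c (c i)) := by
  let e : Fin (i + 1) → Fin n → k := fun l => Pi.basisFun k (Fin n) (l.castLE i.2)
  have he : LinearIndependent k e :=
    (Pi.basisFun k _).linearIndependent.comp _ (Fin.castLE_injective _)
  calc (i : ℕ) + 1 = finrank k (span k (range e)) := by
        rw [finrank_span_eq_card he, Fintype.card_fin]
    _ ≤ _ := Submodule.finrank_mono (span_le.2 ?_)
  rintro _ ⟨l, rfl⟩
  simp only [e, Pi.basisFun_apply, SetLike.mem_coe]
  exact Pi.single_mem_blockFlag (hc (Fin.le_iff_val_le_val.2 (Nat.lt_succ_iff.1 l.2)))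

theorem Matrix.BlockTriangular.mapsTo_blockFlag [Fintype ι] [DecidableEq ι]
    {U : Matrix ι ι k} (hU : U.BlockTriangular c) (t : α) :
    MapsTo (Matrix.toLin' U) (blockFlag k c t) (blockFlag k c t) := by
  intro x hx l hl
  refine Finset.sum_eq_zero fun i _ => ?_
  rcases lt_or_ge t (c i) with h | h
  · simp [hx i h]
  · simp [hU (h.trans_lt hl)]

end BlockFlag

section Triangularization
variable {k α : Type*} [Field k] [IsAlgClosed k] [LinearOrder α] {n : ℕ} {c : Fin n → α}

theorem exists_linearIndependent_triangular_of_commute (hc : Monotone c)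
    {f g : End k (Fin n → k)} (hfg : Commute f g)
    (hf : ∀ t, MapsTo f (blockFlag k c t) (blockFlag k c t))
    (hg : ∀ t, MapsTo g (blockFlag k c t) (blockFlag k c t)) (j : ℕ) (hj : j ≤ n) :
    ∃ v : Fin j → Fin n → k, LinearIndependent k v ∧ (∀ i, v i ∈ blockFlag k c (c (i.castLE hj))) ∧
      (∀ i, f (v i) ∈ span k (v '' Iic i)) ∧ ∀ i, g (v i) ∈ span k (v '' Iic i) := by
  induction j with
  | zero => exact ⟨Fin.elim0, linearIndependent_empty_type, nofun, nofun, nofun⟩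
  | succ j ih =>
    obtain ⟨v, hli, hvA, hfv, hgv⟩ := ih (Nat.le_of_succ_le hj)
    let F := span k (range v)
    have hFA : F < blockFlag k c (c ⟨j, hj⟩) := by
      refine Submodule.lt_of_le_of_finrank_lt_finrank (span_le.2 ?_) ?_
      · rintro _ ⟨i, rfl⟩
        exact blockFlag_mono (hc (Fin.le_iff_val_le_val.2 i.2.le)) (hvA i)
      · rw [finrank_span_eq_card hli, Fintype.card_fin]
        exact le_finrank_blockFlag hc ⟨j, hj⟩
    have hinv : ∀ φ : End k (Fin n → k), (∀ i, φ (v i) ∈ span k (v '' Iic i)) → MapsTo φ F F :=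
      fun φ hφ x hx => (map_span_le φ _ _).2
        (by rintro _ ⟨i, rfl⟩; exact span_mono (image_subset_range _ _) (hφ i)) (mem_map_of_mem hx)
    obtain ⟨x, hxA, hxF, hfx, hgx⟩ := exists_mem_sup_span_singleton_of_commute hfg hFA
      (hinv f hfv) (hinv g hgv) (hf _) (hg _)
    refine ⟨Fin.snoc v x, linearIndependent_finSnoc.2 ⟨hli, hxF⟩, fun i => ?_,
      Fin.snoc_mem_span_image_Iic hfv hfx, Fin.snoc_mem_span_image_Iic hgv hgx⟩
    induction i using Fin.lastCases with
    | last => rw [Fin.snoc_last]; exact hxA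
    | cast i => simpa using hvA i

theorem Matrix.exists_blockTriangular_conj_upperTriangular (hc : Monotone c)
    {U V : Matrix (Fin n) (Fin n) k} (hU : U.BlockTriangular c) (hV : V.BlockTriangular c)
    (hUV : Commute U V) :
    ∃ G : Matrix (Fin n) (Fin n) k, IsUnit G.det ∧ G.BlockTriangular c ∧
      (G⁻¹ * U * G).BlockTriangular id ∧ (G⁻¹ * V * G).BlockTriangular id := by
  obtain ⟨v, hli, hvc, hUv, hVv⟩ := exists_linearIndependent_triangular_of_commute hc
    (hUV.map toLinAlgEquiv')
    hU.mapsTo_blockFlag hV.mapsTo_blockFlag n le_rfl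
  classical
  let β := basisOfPiSpaceOfLinearIndependent hli
  let std := Pi.basisFun k (Fin n)
  have hβ : ⇑β = v := coe_basisOfPiSpaceOfLinearIndependent hli
  have hconj : ∀ W,
      (std.toMatrix β)⁻¹ * W * std.toMatrix β = LinearMap.toMatrix β β (toLin' W) := by
    intro W
    rw [inv_eq_left_inv (β.toMatrix_mul_toMatrix_flip std),
      ← basis_toMatrix_mul_linearMap_toMatrix_mul_basis_toMatrix β std β std,
      LinearMap.toMatrix_eq_toMatrix', LinearMap.toMatrix'_toLin']
  have htri : ∀ W : Matrix (Fin n) (Fin n) k, (∀ i, toLin' W (v i) ∈ span k (v '' Iic i)) →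
      (LinearMap.toMatrix β β (toLin' W)).BlockTriangular id := by
    intro W hW l j hjl
    rw [LinearMap.toMatrix_apply, ← Finsupp.notMem_support_iff]
    exact fun hl => hjl.not_ge (β.mem_span_image.1 (hβ ▸ hW j) hl)
  refine ⟨std.toMatrix β, ?_, fun i j hij => ?_, hconj U ▸ htri U hUv, hconj V ▸ htri V hVv⟩
  · exact isUnit_det_of_right_inverse (std.toMatrix_mul_toMatrix_flip β)
  · simpa [std, Module.Basis.toMatrix_apply, hβ] using hvc j i (by simpa using hij)

end Triangularization

section BlockMatrix
variable {R : Type*} [CommRing R] {n : ℕ}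

def blockMat (d : Fin n → ℕ) (w : PIdx n d → R) : Matrix (Fin n) (Fin n) R :=
  Matrix.of fun i j => if h : d i ≤ d j then w ⟨(i, j), h⟩ else 0

def blockEntries (d : Fin n → ℕ) (M : Matrix (Fin n) (Fin n) R) : PIdx n d → R :=
  fun s => M s.1.1 s.1.2

variable {d : Fin n → ℕ}

theorem blockMat_blockTriangular (w : PIdx n d → R) : (blockMat d w).BlockTriangular d :=
  fun _ _ hij => dif_neg hij.not_ge

theorem blockMat_blockEntries {M : Matrix (Fin n) (Fin n) R} (hM : M.BlockTriangular d) :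
    blockMat d (blockEntries d M) = M := by
  ext i j
  by_cases h : d i ≤ d j
  · simp [blockMat, blockEntries, h]
  · simp [blockMat, h, hM (not_le.1 h)]

theorem blockEntries_blockMat (w : PIdx n d → R) : blockEntries d (blockMat d w) = w := by
  ext ⟨⟨i, j⟩, h⟩
  simp [blockMat, blockEntries, h]

theorem map_blockMat {S : Type*} [CommRing S] (f : R →+* S) (w : PIdx n d → R) :
    (blockMat d w).map f = blockMat d (f ∘ w) := by
  ext i j
  by_cases h : d i ≤ d j <;> simp [blockMat, h]

theorem pMatX_eq_blockMat {k : Type*} [Field k] (x : PIdx n d ⊕ PIdx n d → k) :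
    pMatX k x = blockMat d (x ∘ Sum.inl) := rfl

theorem pMatY_eq_blockMat {k : Type*} [Field k] (x : PIdx n d ⊕ PIdx n d → k) :
    pMatY k x = blockMat d (x ∘ Sum.inr) := rfl

end BlockMatrix

theorem Matrix.BlockTriangular.of_monotone {ι α R : Type*} [LinearOrder ι] [Preorder α] [Zero R]
    {M : Matrix ι ι R} (hM : M.BlockTriangular id) {b : ι → α} (hb : Monotone b) :
    M.BlockTriangular b :=
  fun _ _ h => hM (hb.reflect_lt h)

theorem Matrix.commute_mul_mul_adjugate {R ι : Type*} [CommRing R] [Fintype ι] [DecidableEq ι]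
    (G : Matrix ι ι R) {X Y : Matrix ι ι R} (hXY : Commute X Y) :
    Commute (G * X * G.adjugate) (G * Y * G.adjugate) := by
  have key : ∀ P Q : Matrix ι ι R,
      G * P * G.adjugate * (G * Q * G.adjugate) = G.det • (G * (P * Q) * G.adjugate) := by
    intro P Q
    simp only [Matrix.mul_assoc, ← Matrix.mul_assoc G.adjugate, adjugate_mul, Matrix.smul_mul,
      Matrix.one_mul, Matrix.mul_smul]
  rw [commute_iff_eq, key, key, hXY.eq]

theorem Matrix.commute_inv_mul_mul {k ι : Type*} [Field k] [Fintype ι] [DecidableEq ι]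
    {G U V : Matrix ι ι k} (hG : IsUnit G.det) (hUV : Commute U V) :
    Commute (G⁻¹ * U * G) (G⁻¹ * V * G) := by
  simp only [commute_iff_eq, Matrix.mul_assoc, mul_nonsing_inv_cancel_left _ _ hG]
  rw [← Matrix.mul_assoc U, hUV.eq, Matrix.mul_assoc]

theorem Matrix.mul_smul_inv_conj_mul_adjugate {k ι : Type*} [Field k] [Fintype ι] [DecidableEq ι]
    {G : Matrix ι ι k} (hG : IsUnit G.det) (U : Matrix ι ι k) :
    G * (G.det⁻¹ • (G⁻¹ * U * G)) * G.adjugate = U := by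
  rw [Matrix.mul_smul, Matrix.smul_mul, Matrix.mul_assoc, Matrix.mul_assoc, mul_adjugate,
    ← Matrix.mul_assoc, mul_nonsing_inv_cancel_left _ _ hG, Matrix.mul_smul, Matrix.mul_one,
    smul_smul, inv_mul_cancel₀ hG.ne_zero, one_smul]

section CommutingVariety
variable {R : Type*} [CommRing R] {n : ℕ} {b c : Fin n → ℕ}

/-- The polynomial map `q × (p × p) → q × q`, `(G, X, Y) ↦ (G X adj G, G Y adj G)`. -/
def conjByAdjugate (b c : Fin n → ℕ) (u : PIdx n c ⊕ (PIdx n b ⊕ PIdx n b) → R) :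
    PIdx n c ⊕ PIdx n c → R :=
  let G := blockMat c (u ∘ Sum.inl)
  Sum.elim (blockEntries c (G * blockMat b ((u ∘ Sum.inr) ∘ Sum.inl) * G.adjugate))
    (blockEntries c (G * blockMat b ((u ∘ Sum.inr) ∘ Sum.inr) * G.adjugate))

theorem comp_conjByAdjugate {S : Type*} [CommRing S] (f : R →+* S)
    (u : PIdx n c ⊕ (PIdx n b ⊕ PIdx n b) → R) :
    f ∘ conjByAdjugate b c u = conjByAdjugate b c (f ∘ u) := by
  have hmap : ∀ (d : Fin n → ℕ) (M : Matrix (Fin n) (Fin n) R),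
      f ∘ blockEntries d M = blockEntries d (M.map f) := fun _ _ => rfl
  have hadj : ∀ M : Matrix (Fin n) (Fin n) R, M.adjugate.map f = (M.map f).adjugate :=
    RingHom.map_adjugate f
  simp only [conjByAdjugate, Sum.comp_elim, hmap, Matrix.map_mul, hadj, map_blockMat,
    Function.comp_assoc]

variable {k : Type*} [Field k]

theorem aeval_conjByAdjugate_X (u : PIdx n c ⊕ (PIdx n b ⊕ PIdx n b) → k) :
    (fun s => aeval u (conjByAdjugate b c (X (R := k)) s)) = conjByAdjugate b c u := by
  have hu : (aeval u).toRingHom ∘ X (R := k) = u := _root_.funext (aeval_X u)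
  conv_rhs => rw [← hu, ← comp_conjByAdjugate]
  rfl

theorem image_conjByAdjugate_subset_Cp
    (hpq : {M : Matrix (Fin n) (Fin n) k | M.BlockTriangular b} ⊆
      {M : Matrix (Fin n) (Fin n) k | M.BlockTriangular c}) :
    conjByAdjugate b c '' ((· ∘ Sum.inr) ⁻¹' Cp k n b) ⊆ Cp k n c := by
  rintro _ ⟨u, hu, rfl⟩
  set G := blockMat c (u ∘ Sum.inl)
  have hG := (blockMat_blockTriangular (u ∘ Sum.inl)).adjugate
  have hconj : ∀ X : Matrix (Fin n) (Fin n) k, X.BlockTriangular b →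
      blockMat c (blockEntries c (G * X * G.adjugate)) = G * X * G.adjugate := fun X hX =>
    blockMat_blockEntries (((blockMat_blockTriangular _).mul (hpq hX)).mul hG)
  simp only [Cp, Set.mem_ofPred_eq, pMatX_eq_blockMat, pMatY_eq_blockMat, conjByAdjugate,
    Sum.elim_comp_inl, Sum.elim_comp_inr]
  rw [hconj _ (blockMat_blockTriangular _), hconj _ (blockMat_blockTriangular _)]
  exact (G.commute_mul_mul_adjugate hu).eq

theorem Cp_subset_image_conjByAdjugate [IsAlgClosed k] (hb : Monotone b) (hc : Monotone c) :
    Cp k n c ⊆ conjByAdjugate b c '' ((· ∘ Sum.inr) ⁻¹' Cp k n b) := by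
  intro w hw
  have hUc : (pMatX k w).BlockTriangular c := blockMat_blockTriangular (w ∘ Sum.inl)
  have hVc : (pMatY k w).BlockTriangular c := blockMat_blockTriangular (w ∘ Sum.inr)
  obtain ⟨G, hG, hGc, hU, hV⟩ :=
    Matrix.exists_blockTriangular_conj_upperTriangular hc hUc hVc (Commute.eq hw)
  set X := G.det⁻¹ • (G⁻¹ * pMatX k w * G)
  set Y := G.det⁻¹ • (G⁻¹ * pMatY k w * G)
  have hX : X.BlockTriangular b := fun i j h => by simp [X, hU.of_monotone hb h]
  have hY : Y.BlockTriangular b := fun i j h => by simp [Y, hV.of_monotone hb h]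
  refine ⟨Sum.elim (blockEntries c G) (Sum.elim (blockEntries b X) (blockEntries b Y)), ?_, ?_⟩
  · simp only [Set.mem_preimage, Cp, Set.mem_ofPred_eq, pMatX_eq_blockMat, pMatY_eq_blockMat,
      Sum.elim_comp_inr, Sum.elim_comp_inl, blockMat_blockEntries hX, blockMat_blockEntries hY]
    exact (((Matrix.commute_inv_mul_mul hG hw).smul_left _).smul_right _).eq
  · have hGX : G * X * G.adjugate = pMatX k w := Matrix.mul_smul_inv_conj_mul_adjugate hG _
    have hGY : G * Y * G.adjugate = pMatY k w := Matrix.mul_smul_inv_conj_mul_adjugate hG _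
    simp only [conjByAdjugate, Sum.elim_comp_inr, Sum.elim_comp_inl, blockMat_blockEntries hGc,
      blockMat_blockEntries hX, blockMat_blockEntries hY, hGX, hGY, pMatX_eq_blockMat,
      pMatY_eq_blockMat, blockEntries_blockMat, Sum.elim_comp_inl_inr]

end CommutingVariety

/-- Let `p ⊆ q` be standard parabolic subalgebras of `gl_n(k)` (determined by monotone
block-index functions `b` and `c`, the blocks for `b` refining those for `c`), over an
algebraically closed field `k`.  If the commuting variety `C(p)` is irreducible
(equivalently, its vanishing ideal in the coordinate ring of `p × p` is prime), then the
commuting variety `C(q)` is irreducible. -/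
theorem commVariety_parabolic_irreducible_of_sub
    (k : Type*) [Field k] [IsAlgClosed k] (n : ℕ)
    (b c : Fin n → ℕ) (hb : Monotone b) (hc : Monotone c)
    (hpq : {M : Matrix (Fin n) (Fin n) k | M.BlockTriangular b} ⊆
      {M : Matrix (Fin n) (Fin n) k | M.BlockTriangular c})
    (hp : (vanishingIdeal k (Cp k n b)).IsPrime) :
    (vanishingIdeal k (Cp k n c)).IsPrime := by
  have himage : conjByAdjugate b c '' ((· ∘ Sum.inr) ⁻¹' Cp k n b) = Cp k n c :=
    (image_conjByAdjugate_subset_Cp hpq).antisymm (Cp_subset_image_conjByAdjugate hb hc)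
  rw [← himage, ← _root_.funext aeval_conjByAdjugate_X, vanishingIdeal_image_aeval]
  exact (isPrime_vanishingIdeal_preimage_inr hp).comap _
end

section
/- Let k be a field and let X ∈ b_n be an upper triangular n×n matrix such that the centralizer {W ∈ b_n : WX = XW} has k-dimension exactly n (i.e., X is regular in b_n). Then for every Y ∈ b_n, the k-vector space {(W,Z) ∈ b_n × b_n : (XZ − ZX) + (WY − YW) = 0} has dimension n(n+1)/2 + n. (This is the tangent-space computation showing that points (X,Y) of the commuting scheme of b_n with X regular are smooth points.) -/
/-! Let `𝔟` and `𝔫` be the upper and strictly upper triangular matrices. The tangent space is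
the kernel on `𝔟 × 𝔟` of the differential `Φ(W, Z) = ⁅X, Z⁆ + ⁅W, Y⁆` of the bracket, and
commutators of upper triangular matrices lie in `𝔫`. The kernel of `⁅X, ·⁆ : 𝔟 → 𝔫` is the
centralizer of `X` in `𝔟`, and `dim 𝔟 = dim 𝔫 + n`, so by rank–nullity regularity of `X` means
exactly that `⁅X, ·⁆` maps `𝔟` onto `𝔫`. Hence `Φ` is onto `𝔫` already on `0 × 𝔟`, and
`dim ker Φ = 2 dim 𝔟 - dim 𝔫 = dim 𝔟 + n`. -/

/-- The centralizer in `b_n` (upper triangular `n × n` matrices) of a matrix `X`, as a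
`k`-subspace of the space of matrices: `{W ∈ b_n : WX = XW}`. -/
def borelCentralizer {k : Type*} [Field k] {n : ℕ} (X : Matrix (Fin n) (Fin n) k) :
    Submodule k (Matrix (Fin n) (Fin n) k) where
  carrier := {W | (∀ i j : Fin n, j < i → W i j = 0) ∧ W * X = X * W}
  add_mem' := by
    rintro a b ⟨ha1, ha2⟩ ⟨hb1, hb2⟩
    refine ⟨fun i j h => ?_, ?_⟩
    · simp [Matrix.add_apply, ha1 i j h, hb1 i j h]
    · rw [add_mul, mul_add, ha2, hb2]
  zero_mem' := ⟨fun i j _ => rfl, by rw [zero_mul, mul_zero]⟩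
  smul_mem' := by
    rintro c a ⟨ha1, ha2⟩
    refine ⟨fun i j h => ?_, ?_⟩
    · simp [Matrix.smul_apply, ha1 i j h]
    · rw [Matrix.smul_mul, Matrix.mul_smul, ha2]

/-- The tangent space at `(X, Y)` of the commuting scheme of `b_n`, as a `k`-subspace of
`b_n × b_n`: pairs `(W, Z)` of upper triangular matrices with `[X,Z] + [W,Y] = 0`. -/
def commSchemeTangent {k : Type*} [Field k] {n : ℕ} (X Y : Matrix (Fin n) (Fin n) k) :
    Submodule k (Matrix (Fin n) (Fin n) k × Matrix (Fin n) (Fin n) k) where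
  carrier := {WZ | (∀ i j : Fin n, j < i → WZ.1 i j = 0) ∧
    (∀ i j : Fin n, j < i → WZ.2 i j = 0) ∧
    (X * WZ.2 - WZ.2 * X) + (WZ.1 * Y - Y * WZ.1) = 0}
  add_mem' := by
    rintro ⟨a1, a2⟩ ⟨b1, b2⟩ ⟨ha1, ha2, ha3⟩ ⟨hb1, hb2, hb3⟩
    refine ⟨fun i j h => ?_, fun i j h => ?_, ?_⟩
    · show (a1 + b1) i j = 0
      rw [Matrix.add_apply, show a1 i j = 0 from ha1 i j h,
        show b1 i j = 0 from hb1 i j h, add_zero]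
    · show (a2 + b2) i j = 0
      rw [Matrix.add_apply, show a2 i j = 0 from ha2 i j h,
        show b2 i j = 0 from hb2 i j h, add_zero]
    · have h : ((X * a2 - a2 * X) + (a1 * Y - Y * a1)) +
          ((X * b2 - b2 * X) + (b1 * Y - Y * b1)) = 0 := by
        rw [ha3, hb3, add_zero]
      rw [← h]
      simp only [Prod.fst_add, Prod.snd_add]
      noncomm_ring
  zero_mem' := by
    refine ⟨fun i j _ => rfl, fun i j _ => rfl, ?_⟩
    simp
  smul_mem' := by
    rintro c ⟨a1, a2⟩ ⟨ha1, ha2, ha3⟩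
    refine ⟨fun i j h => ?_, fun i j h => ?_, ?_⟩
    · show (c • a1) i j = 0
      rw [Matrix.smul_apply, show a1 i j = 0 from ha1 i j h, smul_zero]
    · show (c • a2) i j = 0
      rw [Matrix.smul_apply, show a2 i j = 0 from ha2 i j h, smul_zero]
    · have h : c • ((X * a2 - a2 * X) + (a1 * Y - Y * a1)) = 0 := by
        rw [ha3, smul_zero]
      rw [← h]
      simp only [Prod.smul_fst, Prod.smul_snd, smul_add, smul_sub,
        Matrix.mul_smul, Matrix.smul_mul]

open Module LieAlgebra

namespace Matrix

variable {R m n : Type*}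

section SupportedOn

variable [Semiring R] (R)

def supportedOn (S : m → n → Prop) : Submodule R (Matrix m n R) where
  carrier := {M | ∀ i j, ¬ S i j → M i j = 0}
  add_mem' ha hb i j h := by simp [ha i j h, hb i j h]
  zero_mem' _ _ _ := rfl
  smul_mem' c _ ha i j h := by simp [ha i j h]

variable {R}

theorem mem_supportedOn {S : m → n → Prop} {M : Matrix m n R} :
    M ∈ supportedOn R S ↔ ∀ i j, ¬ S i j → M i j = 0 := Iff.rfl

def supportedOnEquiv (S : m → n → Prop) [∀ i j, Decidable (S i j)] :
    supportedOn R S ≃ₗ[R] ({p : m × n // S p.1 p.2} → R) where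
  toFun M p := M.1 p.1.1 p.1.2
  map_add' _ _ := rfl
  map_smul' _ _ := rfl
  invFun f := ⟨of fun i j => if h : S i j then f ⟨(i, j), h⟩ else 0, fun i j h => by simp [h]⟩
  left_inv M := by
    ext i j
    by_cases h : S i j
    · simp [h]
    · simp [h, M.2 i j h]
  right_inv f := by
    ext p
    simp [p.2]

theorem finrank_supportedOn [StrongRankCondition R] [Fintype m] [Fintype n] (S : m → n → Prop) :
    finrank R (supportedOn R S) = Nat.card {p : m × n // S p.1 p.2} := by
  classical
  rw [(supportedOnEquiv S).finrank_eq, finrank_pi, Nat.card_eq_fintype_card]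

end SupportedOn

section Triangular

variable (R m) [Semiring R] [LinearOrder m]

def upperTriangular : Submodule R (Matrix m m R) := supportedOn R (· ≤ ·)

def strictUpperTriangular : Submodule R (Matrix m m R) := supportedOn R (· < ·)

variable {R m}

theorem mem_upperTriangular {M : Matrix m m R} :
    M ∈ upperTriangular R m ↔ M.IsUpperTriangular := by
  simp only [upperTriangular, mem_supportedOn, not_le]
  exact ⟨fun h i j hij => h i j hij, fun h i j hij => h hij⟩

theorem mem_strictUpperTriangular {M : Matrix m m R} :
    M ∈ strictUpperTriangular R m ↔ ∀ i j, j ≤ i → M i j = 0 := by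
  simp only [strictUpperTriangular, mem_supportedOn, not_lt]

variable [Fintype m] [StrongRankCondition R]

theorem finrank_upperTriangular :
    finrank R (upperTriangular R m) = Fintype.card m * (Fintype.card m + 1) / 2 := by
  rw [upperTriangular, finrank_supportedOn, ← Nat.card_congr Sym2.sortEquiv,
    Nat.card_eq_fintype_card, Sym2.card, Nat.choose_two_right, Nat.add_sub_cancel, mul_comm]

theorem finrank_upperTriangular_eq_finrank_strictUpperTriangular_add :
    finrank R (upperTriangular R m) = finrank R (strictUpperTriangular R m) + Fintype.card m := by
  classical
  have hdisj : Disjoint (fun p : m × m => p.1 < p.2) (fun p => p.1 = p.2) :=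
    Pi.disjoint_iff.2 fun p => Prop.disjoint_iff.2 fun ⟨hlt, heq⟩ => hlt.ne heq
  rw [upperTriangular, strictUpperTriangular, finrank_supportedOn, finrank_supportedOn,
    Nat.card_eq_fintype_card, Nat.card_eq_fintype_card]
  simp_rw [le_iff_lt_or_eq]
  have hdiag : Fintype.card {p : m × m // p.1 = p.2} = Fintype.card m := by
    rw [Fintype.card_subtype, ← Finset.card_univ (α := m), ← Finset.diag_card Finset.univ]
    congr 1
    ext
    simp [Finset.mem_diag]
  rw [Fintype.card_subtype_or_disjoint _ _ hdisj, hdiag]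

end Triangular

section Commutator

variable [CommRing R] [Fintype m] [LinearOrder m]

theorem IsUpperTriangular.mul_apply_self {M N : Matrix m m R} (hM : M.IsUpperTriangular)
    (hN : N.IsUpperTriangular) (i : m) : (M * N) i i = M i i * N i i := by
  rw [mul_apply, Finset.sum_eq_single i]
  · intro l _ hl
    rcases hl.lt_or_gt with h | h
    · rw [hM h, zero_mul]
    · rw [hN h, mul_zero]
  · simp

theorem lie_mem_strictUpperTriangular {M N : Matrix m m R} (hM : M ∈ upperTriangular R m)
    (hN : N ∈ upperTriangular R m) : ⁅M, N⁆ ∈ strictUpperTriangular R m := by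
  rw [mem_upperTriangular] at hM hN
  rw [mem_strictUpperTriangular, Ring.lie_def]
  intro i j hji
  rcases hji.lt_or_eq with h | rfl
  · rw [sub_apply, hM.mul hN h, hN.mul hM h, sub_zero]
  · rw [sub_apply, hM.mul_apply_self hN, hN.mul_apply_self hM, mul_comm, sub_self]

end Commutator

end Matrix

section Differential

variable {R L : Type*} [CommRing R] [LieRing L] [LieAlgebra R L]

def LieAlgebra.bracketDifferential (X Y : L) : L × L →ₗ[R] L :=
  (ad R L X).comp (LinearMap.snd R L L) - (ad R L Y).comp (LinearMap.fst R L L)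

theorem LieAlgebra.bracketDifferential_apply (X Y W Z : L) :
    bracketDifferential (R := R) X Y (W, Z) = ⁅X, Z⁆ + ⁅W, Y⁆ := by
  simp [bracketDifferential, sub_eq_add_neg, lie_skew]

end Differential

theorem Submodule.finrank_prod {K V W : Type*} [DivisionRing K] [AddCommGroup V] [Module K V]
    [AddCommGroup W] [Module K W] (p : Submodule K V) (q : Submodule K W) [FiniteDimensional K p]
    [FiniteDimensional K q] : finrank K (p.prod q) = finrank K p + finrank K q := by
  rw [← p.range_subtype, ← q.range_subtype, ← LinearMap.range_prodMap,
    LinearMap.finrank_range_of_inj (p.injective_subtype.prodMap q.injective_subtype),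
    Module.finrank_prod, p.range_subtype, q.range_subtype]

theorem Submodule.finrank_inf_ker_add_finrank_map {K V W : Type*} [DivisionRing K]
    [AddCommGroup V] [Module K V] [AddCommGroup W] [Module K W] (p : Submodule K V)
    [FiniteDimensional K p] (f : V →ₗ[K] W) :
    finrank K (p ⊓ LinearMap.ker f : Submodule K V) + finrank K (p.map f) = finrank K p := by
  rw [← p.map_comap_subtype, p.finrank_map_subtype_eq, ← LinearMap.ker_domRestrict,
    ← LinearMap.range_domRestrict, add_comm, LinearMap.finrank_range_add_finrank_ker]

section Borel

open Matrix

attribute [local instance] LieRing.ofAssociativeRing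

variable {K m : Type*} [Field K] [Fintype m] [LinearOrder m]

theorem map_ad_upperTriangular_of_finrank_centralizer {X : Matrix m m K}
    (hX : X ∈ upperTriangular K m)
    (hreg : finrank K (upperTriangular K m ⊓ LinearMap.ker (ad K (Matrix m m K) X) :
      Submodule K _) = Fintype.card m) :
    (upperTriangular K m).map (ad K (Matrix m m K) X) = strictUpperTriangular K m := by
  apply Submodule.eq_of_le_of_finrank_eq
  · rintro _ ⟨Z, hZ, rfl⟩
    exact lie_mem_strictUpperTriangular hX hZ
  · have := (upperTriangular K m).finrank_inf_ker_add_finrank_map (ad K (Matrix m m K) X)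
    have := finrank_upperTriangular_eq_finrank_strictUpperTriangular_add (R := K) (m := m)
    omega

theorem map_bracketDifferential_upperTriangular {X Y : Matrix m m K}
    (hX : (upperTriangular K m).map (ad K (Matrix m m K) X) = strictUpperTriangular K m)
    (hY : Y ∈ upperTriangular K m) :
    ((upperTriangular K m).prod (upperTriangular K m)).map (bracketDifferential X Y) =
      strictUpperTriangular K m := by
  apply le_antisymm
  · rintro _ ⟨⟨W, Z⟩, ⟨hW, hZ⟩, rfl⟩
    rw [bracketDifferential_apply]
    exact add_mem (hX ▸ Submodule.mem_map_of_mem hZ) (lie_mem_strictUpperTriangular hW hY)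
  · rw [← hX]
    rintro _ ⟨Z, hZ, rfl⟩
    exact ⟨(0, Z), ⟨zero_mem _, hZ⟩, by simp [bracketDifferential_apply]⟩

theorem finrank_inf_ker_bracketDifferential_of_finrank_centralizer {X Y : Matrix m m K}
    (hX : X ∈ upperTriangular K m)
    (hreg : finrank K (upperTriangular K m ⊓ LinearMap.ker (ad K (Matrix m m K) X) :
      Submodule K _) = Fintype.card m)
    (hY : Y ∈ upperTriangular K m) :
    finrank K ((upperTriangular K m).prod (upperTriangular K m) ⊓
        LinearMap.ker (bracketDifferential X Y) : Submodule K _) =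
      finrank K (upperTriangular K m) + Fintype.card m := by
  have hrank := ((upperTriangular K m).prod (upperTriangular K m)).finrank_inf_ker_add_finrank_map
    (bracketDifferential X Y)
  rw [map_bracketDifferential_upperTriangular
    (map_ad_upperTriangular_of_finrank_centralizer hX hreg) hY, Submodule.finrank_prod] at hrank
  have := finrank_upperTriangular_eq_finrank_strictUpperTriangular_add (R := K) (m := m)
  omega

variable {k : Type*} [Field k] {n : ℕ}

theorem borelCentralizer_eq_inf_ker (X : Matrix (Fin n) (Fin n) k) :
    borelCentralizer X =
      upperTriangular k (Fin n) ⊓ LinearMap.ker (ad k (Matrix (Fin n) (Fin n) k) X) := by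
  ext W
  rw [Submodule.mem_inf, LinearMap.mem_ker, ad_apply, Ring.lie_def, sub_eq_zero, eq_comm,
    mem_upperTriangular]
  rfl

theorem commSchemeTangent_eq_inf_ker (X Y : Matrix (Fin n) (Fin n) k) :
    commSchemeTangent X Y = (upperTriangular k (Fin n)).prod (upperTriangular k (Fin n)) ⊓
      LinearMap.ker (bracketDifferential X Y) := by
  ext ⟨W, Z⟩
  rw [Submodule.mem_inf, Submodule.mem_prod, LinearMap.mem_ker, bracketDifferential_apply,
    Ring.lie_def, Ring.lie_def, mem_upperTriangular, mem_upperTriangular, and_assoc]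
  rfl

end Borel

/-- Let `X` be an upper triangular `n × n` matrix over a field `k` whose centralizer in `b_n`
has dimension exactly `n` (i.e. `X` is regular in `b_n`).  Then for every upper triangular
`Y`, the space `{(W,Z) ∈ b_n × b_n : [X,Z] + [W,Y] = 0}` — the tangent space of the
commuting scheme of `b_n` at `(X,Y)` — has dimension `n(n+1)/2 + n`. -/
theorem commScheme_tangent_dim_of_regular {k : Type*} [Field k] {n : ℕ}
    (X : Matrix (Fin n) (Fin n) k) (hX : ∀ i j : Fin n, j < i → X i j = 0)
    (hreg : Module.finrank k (borelCentralizer X) = n)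
    (Y : Matrix (Fin n) (Fin n) k) (hY : ∀ i j : Fin n, j < i → Y i j = 0) :
    Module.finrank k (commSchemeTangent X Y) = n * (n + 1) / 2 + n := by
  rw [borelCentralizer_eq_inf_ker] at hreg
  rw [commSchemeTangent_eq_inf_ker, finrank_inf_ker_bracketDifferential_of_finrank_centralizer
    (Matrix.mem_upperTriangular.2 hX) (hreg.trans (Fintype.card_fin n).symm)
    (Matrix.mem_upperTriangular.2 hY), Matrix.finrank_upperTriangular, Fintype.card_fin]
end
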